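/- arXiv:2003.09576 — 7 statements merged into one kernel-verified Lean document; each statement's English description precedes it below -/
import Mathlib

section
/- For every ε > 0 and every 1 < p < ∞ with conjugate exponent q (i.e. 1/p + 1/q = 1), there exist a natural number N and a decreasing sequence of positive reals a_1 ≥ a_2 ≥ ... ≥ a_N > 0 such that ∑_{n=1}^N a_n > ε^{-2} and ∑_{n=1}^N (∑_{j=n}^N a_j^q)^{p/q} < ε^p. -/
open Finset Filter Real Topology

/-!
Take the harmonic weights `a_n = c / n`. Telescoping the mean-value bound
`(q - 1) (x + 1)^(-q) ≤ x^(1-q) - (x + 1)^(1-q)` gives `∑_{j=n}^N a_j^q ≤ p c^q n^(1-q)`, and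
since `(1 - q) p / q = -1` the outer sum is at most `c^p p^(p/q) H_N`, where `H_N` is the `N`-th
harmonic number. Normalising `c H_N = 2 ε^(-2)` makes the bound `(2 ε^(-2))^p p^(p/q) H_N^(1-p)`,
which tends to `0` because `H_N → ∞` and `p > 1`.
-/

lemma sub_one_mul_rpow_neg_le_sub_rpow_one_sub {q x : ℝ} (hq : 1 ≤ q) (hx : 0 < x) :
    (q - 1) * (x + 1) ^ (-q) ≤ x ^ (1 - q) - (x + 1) ^ (1 - q) := by
  obtain ⟨ξ, hξ, hslope⟩ := exists_hasDerivAt_eq_slope (fun t : ℝ => t ^ (1 - q))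
    (fun t => (1 - q) * t ^ (-q)) (lt_add_one x)
    (continuousOn_id.rpow_const fun t ht => Or.inl (hx.trans_le ht.1).ne')
    (fun t ht => by
      simpa [sub_sub_cancel_left, sub_eq_add_neg] using
        hasDerivAt_rpow_const (p := 1 - q) (Or.inl (hx.trans ht.1).ne'))
  have hξ_pos : 0 < ξ := hx.trans hξ.1
  have hmono : (x + 1) ^ (-q) ≤ ξ ^ (-q) :=
    rpow_le_rpow_of_nonpos hξ_pos hξ.2.le (by linarith)
  rw [add_sub_cancel_left, div_one] at hslope
  have := mul_le_mul_of_nonneg_left hmono (sub_nonneg.2 hq)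
  linarith

lemma sub_one_mul_sum_Ioc_rpow_neg_le {q : ℝ} (hq : 1 ≤ q) {m N : ℕ} (hm : 0 < m)
    (hmN : m ≤ N) :
    (q - 1) * ∑ j ∈ Ioc m N, (j : ℝ) ^ (-q) ≤ (m : ℝ) ^ (1 - q) - (N : ℝ) ^ (1 - q) := by
  induction N, hmN using Nat.le_induction with
  | base => simp
  | succ N hmN ih =>
    have hstep := sub_one_mul_rpow_neg_le_sub_rpow_one_sub hq (x := N)
      (by exact_mod_cast hm.trans_le hmN)
    rw [sum_Ioc_succ_top hmN, mul_add]
    push_cast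
    linarith

lemma sum_Icc_rpow_neg_le {q : ℝ} (hq : 1 < q) {n : ℕ} (hn : 0 < n) (N : ℕ) :
    ∑ j ∈ Icc n N, (j : ℝ) ^ (-q) ≤ q / (q - 1) * (n : ℝ) ^ (1 - q) := by
  have hq₁ : 0 < q - 1 := sub_pos.2 hq
  rcases le_or_gt n N with hnN | hNn
  · have htail := sub_one_mul_sum_Ioc_rpow_neg_le hq.le hn hnN
    have hhead : (n : ℝ) ^ (-q) ≤ (n : ℝ) ^ (1 - q) :=
      rpow_le_rpow_of_exponent_le (by exact_mod_cast hn) (by linarith)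
    have hN : 0 ≤ (N : ℝ) ^ (1 - q) := by positivity
    have := mul_le_mul_of_nonneg_left hhead hq₁.le
    rw [Icc_eq_cons_Ioc hnN, sum_cons, div_mul_eq_mul_div, le_div_iff₀ hq₁]
    linarith
  · rw [Icc_eq_empty (by omega), sum_empty]
    positivity

lemma rpow_sum_Icc_div_rpow_le {p q : ℝ} (hpq : p.HolderConjugate q) {c : ℝ} (hc : 0 ≤ c)
    {n : ℕ} (hn : 0 < n) (N : ℕ) :
    (∑ j ∈ Icc n N, (c / j) ^ q) ^ (p / q) ≤ c ^ p * p ^ (p / q) * (n : ℝ)⁻¹ := by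
  have hp := hpq.pos
  have hq := hpq.symm.pos
  have hn' : (0 : ℝ) < n := by exact_mod_cast hn
  have hinner : ∑ j ∈ Icc n N, (c / j) ^ q ≤ c ^ q * (p * (n : ℝ) ^ (1 - q)) := by
    simp_rw [div_rpow hc (Nat.cast_nonneg _), div_eq_mul_inv, ← rpow_neg (Nat.cast_nonneg _),
      ← mul_sum]
    gcongr
    simpa [← hpq.symm.conjugate_eq] using sum_Icc_rpow_neg_le hpq.symm.lt hn N
  calc (∑ j ∈ Icc n N, (c / j) ^ q) ^ (p / q)
      ≤ (c ^ q * (p * (n : ℝ) ^ (1 - q))) ^ (p / q) := by gcongr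
    _ = c ^ p * p ^ (p / q) * (n : ℝ) ^ ((1 - q) * (p / q)) := by
      rw [mul_rpow (by positivity) (by positivity), mul_rpow hp.le (by positivity),
        ← rpow_mul hc, ← rpow_mul hn'.le, mul_div_cancel₀ _ hq.ne', mul_assoc]
    _ = c ^ p * p ^ (p / q) * (n : ℝ)⁻¹ := by
      rw [sub_mul, one_mul, mul_div_cancel₀ _ hq.ne', hpq.div_conj_eq_sub_one, sub_sub_cancel_left,
        rpow_neg_one]

lemma sum_rpow_sum_Icc_div_le {p q : ℝ} (hpq : p.HolderConjugate q) {c : ℝ} (hc : 0 ≤ c)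
    (N : ℕ) :
    ∑ n ∈ Icc 1 N, (∑ j ∈ Icc n N, (c / j) ^ q) ^ (p / q)
      ≤ c ^ p * p ^ (p / q) * ∑ n ∈ Icc 1 N, (n : ℝ)⁻¹ := by
  rw [mul_sum]
  exact sum_le_sum fun n hn => rpow_sum_Icc_div_rpow_le hpq hc (mem_Icc.1 hn).1 N

lemma tendsto_sum_Icc_inv_atTop :
    Tendsto (fun N : ℕ => ∑ n ∈ Icc 1 N, (n : ℝ)⁻¹) atTop atTop := by
  refine tendsto_atTop_mono (fun N => ?_)
    (tendsto_log_atTop.comp (tendsto_natCast_atTop_atTop.comp (tendsto_add_atTop_nat 1)))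
  simpa [harmonic_eq_sum_Icc] using log_add_one_le_harmonic N

theorem stmt0_general (ε p q : ℝ) (hε : 0 < ε) (hq : 1 < q)
    (hpq : 1 / p + 1 / q = 1) :
    ∃ (N : ℕ) (a : ℕ → ℝ), 0 < N ∧
      (∀ n, 1 ≤ n → n ≤ N → 0 < a n) ∧
      (∀ m n, 1 ≤ m → m ≤ n → n ≤ N → a n ≤ a m) ∧
      (∑ n ∈ Icc 1 N, a n > ε ^ (-2 : ℝ)) ∧
      (∑ n ∈ Icc 1 N, (∑ j ∈ Icc n N, a j ^ q) ^ (p / q) < ε ^ p) := by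
  have hpq' : p.HolderConjugate q :=
    (holderConjugate_iff.2 ⟨hq, by simpa [add_comm] using hpq⟩).symm
  set H : ℕ → ℝ := fun N => ∑ n ∈ Icc 1 N, (n : ℝ)⁻¹
  set A : ℝ := 2 * ε ^ (-2 : ℝ)
  have hsmall : Tendsto (fun N => A ^ p * p ^ (p / q) * H N ^ (1 - p)) atTop (𝓝 0) := by
    simpa using ((tendsto_rpow_neg_atTop hpq'.sub_one_pos).comp
      tendsto_sum_Icc_inv_atTop).const_mul (A ^ p * p ^ (p / q))
  obtain ⟨N, hN, hH, hlt⟩ := ((eventually_ge_atTop 1).and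
    ((tendsto_sum_Icc_inv_atTop.eventually_gt_atTop 0).and
      (hsmall.eventually_lt_const (rpow_pos_of_pos hε p)))).exists
  set c := A / H N
  have hc : 0 < c := by positivity
  refine ⟨N, fun n => c / n, hN, fun n hn _ => by positivity,
    fun m n hm hmn _ => div_le_div_of_nonneg_left hc.le (by exact_mod_cast hm)
      (by exact_mod_cast hmn), ?_, ?_⟩
  · have hsum : ∑ n ∈ Icc 1 N, c / n = A := by
      simp only [div_eq_mul_inv c, ← mul_sum]
      exact div_mul_cancel₀ A hH.ne'
    rw [hsum]
    linarith [rpow_pos_of_pos hε (-2)]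
  · calc ∑ n ∈ Icc 1 N, (∑ j ∈ Icc n N, (c / j) ^ q) ^ (p / q)
        ≤ c ^ p * p ^ (p / q) * H N := sum_rpow_sum_Icc_div_le hpq' hc.le N
      _ = A ^ p * p ^ (p / q) * H N ^ (1 - p) := by
        rw [div_rpow (by positivity) hH.le, rpow_sub hH, rpow_one]
        ring
      _ < ε ^ p := hlt

theorem stmt0 (ε p q : ℝ) (hε : 0 < ε) (hp : 1 < p) (hq : 1 < q)
    (hpq : 1 / p + 1 / q = 1) :
    ∃ (N : ℕ) (a : ℕ → ℝ), 0 < N ∧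
      (∀ n, 1 ≤ n → n ≤ N → 0 < a n) ∧
      (∀ m n, 1 ≤ m → m ≤ n → n ≤ N → a n ≤ a m) ∧
      (∑ n ∈ Icc 1 N, a n > ε ^ (-2 : ℝ)) ∧
      (∑ n ∈ Icc 1 N, (∑ j ∈ Icc n N, a j ^ q) ^ (p / q) < ε ^ p) :=
  stmt0_general ε p q hε hq hpq
end

section
/- Let 1 < p < ∞ and q satisfy 1/p + 1/q = 1. Then the improper integral ∫_1^∞ (∫_x^∞ ((t+1)ln(t+1))^{-q} dt)^{p/q} dx is finite; in fact it is at most (q-1)^{-p/q} (p-1)^{-1} (ln 2)^{1-p}. -/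
open MeasureTheory Real Set Filter Topology

/-!
On `(x, ∞)` the factor `log (t + 1) ^ (-q)` is at most `log (x + 1) ^ (-q)`, so the inner integral
is at most `log (x + 1) ^ (-q) * (x + 1) ^ (1 - q) / (q - 1)`. Since `p / q = p - 1` for conjugate
exponents, its `p / q`-th power is `(q - 1) ^ (-(p / q)) / ((x + 1) * log (x + 1) ^ p)`, and
`-log (x + 1) ^ (1 - p) / (p - 1)` is an antiderivative of the latter vanishing at infinity.
-/

section DerivMulRpowNeg

variable {u u' : ℝ → ℝ} {a r : ℝ}

lemma hasDerivAt_neg_rpow_one_sub_div {t : ℝ} (hr : 1 < r) (hu : HasDerivAt u (u' t) t)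
    (hut : u t ≠ 0) :
    HasDerivAt (fun s => -u s ^ (1 - r) / (r - 1)) (u' t * u t ^ (-r)) t := by
  refine ((hu.rpow_const (p := 1 - r) (Or.inl hut)).neg.div_const (r - 1)).congr_deriv ?_
  rw [show 1 - r - 1 = -r by ring]
  field_simp [(sub_pos.2 hr).ne']
  ring

lemma tendsto_neg_rpow_one_sub_div_atTop (hr : 1 < r) (hlim : Tendsto u atTop atTop) :
    Tendsto (fun s => -u s ^ (1 - r) / (r - 1)) atTop (𝓝 0) := by
  have h := (tendsto_rpow_neg_atTop (sub_pos.2 hr)).comp hlim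
  simpa [neg_sub, Function.comp_def] using h.neg.div_const (r - 1)

variable (hr : 1 < r) (hu : ∀ t ∈ Ici a, HasDerivAt u (u' t) t)
  (hu_pos : ∀ t ∈ Ici a, 0 < u t) (hu' : ∀ t ∈ Ioi a, 0 ≤ u' t)
  (hlim : Tendsto u atTop atTop)
include hr hu hu_pos hu' hlim

lemma integrableOn_Ioi_deriv_mul_rpow_neg :
    IntegrableOn (fun t => u' t * u t ^ (-r)) (Ioi a) :=
  integrableOn_Ioi_deriv_of_nonneg'
    (fun t ht => hasDerivAt_neg_rpow_one_sub_div hr (hu t ht) (hu_pos t ht).ne')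
    (fun t ht => mul_nonneg (hu' t ht) (rpow_nonneg (hu_pos t (mem_Ici_of_Ioi ht)).le _))
    (tendsto_neg_rpow_one_sub_div_atTop hr hlim)

lemma integral_Ioi_deriv_mul_rpow_neg :
    ∫ t in Ioi a, u' t * u t ^ (-r) = u a ^ (1 - r) / (r - 1) := by
  rw [integral_Ioi_of_hasDerivAt_of_nonneg'
    (fun t ht => hasDerivAt_neg_rpow_one_sub_div hr (hu t ht) (hu_pos t ht).ne')
    (fun t ht => mul_nonneg (hu' t ht) (rpow_nonneg (hu_pos t (mem_Ici_of_Ioi ht)).le _))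
    (tendsto_neg_rpow_one_sub_div_atTop hr hlim)]
  ring

end DerivMulRpowNeg

lemma hasDerivAt_log_add_one {t : ℝ} (ht : -1 < t) :
    HasDerivAt (fun s => log (s + 1)) (t + 1)⁻¹ t := by
  simpa using ((hasDerivAt_id' t).add_const 1).log (by linarith)

lemma integral_Ioi_add_one_rpow_neg {q x : ℝ} (hq : 1 < q) (hx : -1 < x) :
    IntegrableOn (fun t => (t + 1) ^ (-q)) (Ioi x) ∧
      ∫ t in Ioi x, (t + 1) ^ (-q) = (x + 1) ^ (1 - q) / (q - 1) := by
  have hu : ∀ t ∈ Ici x, HasDerivAt (fun s => s + 1) 1 t :=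
    fun t _ => (hasDerivAt_id t).add_const 1
  have hu_pos : ∀ t ∈ Ici x, 0 < t + 1 := fun t ht => by linarith [ht.out]
  have hlim : Tendsto (fun s : ℝ => s + 1) atTop atTop :=
    tendsto_atTop_add_const_right _ 1 tendsto_id
  simpa using And.intro
    (integrableOn_Ioi_deriv_mul_rpow_neg hq hu hu_pos (fun _ _ => zero_le_one) hlim)
    (integral_Ioi_deriv_mul_rpow_neg hq hu hu_pos (fun _ _ => zero_le_one) hlim)

lemma integral_Ioi_inv_add_one_mul_log_rpow_neg {p x : ℝ} (hp : 1 < p) (hx : 0 < x) :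
    IntegrableOn (fun t => (t + 1)⁻¹ * log (t + 1) ^ (-p)) (Ioi x) ∧
      ∫ t in Ioi x, (t + 1)⁻¹ * log (t + 1) ^ (-p) = log (x + 1) ^ (1 - p) / (p - 1) := by
  have hu : ∀ t ∈ Ici x, HasDerivAt (fun s => log (s + 1)) (t + 1)⁻¹ t :=
    fun t ht => hasDerivAt_log_add_one (by linarith [ht.out])
  have hu_pos : ∀ t ∈ Ici x, 0 < log (t + 1) := fun t ht => log_pos (by linarith [ht.out])
  have hu' : ∀ t ∈ Ioi x, 0 ≤ (t + 1)⁻¹ := fun t ht => inv_nonneg.2 (by linarith [ht.out])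
  have hlim : Tendsto (fun s => log (s + 1)) atTop atTop :=
    tendsto_log_atTop.comp (tendsto_atTop_add_const_right _ 1 tendsto_id)
  exact ⟨integrableOn_Ioi_deriv_mul_rpow_neg hp hu hu_pos hu' hlim,
    integral_Ioi_deriv_mul_rpow_neg hp hu hu_pos hu' hlim⟩

lemma integral_Ioi_add_one_mul_log_rpow_neg_le {q x : ℝ} (hq : 1 < q) (hx : 0 < x) :
    ∫ t in Ioi x, ((t + 1) * log (t + 1)) ^ (-q)
      ≤ log (x + 1) ^ (-q) * ((x + 1) ^ (1 - q) / (q - 1)) := by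
  obtain ⟨hint, hval⟩ := integral_Ioi_add_one_rpow_neg hq (by linarith)
  rw [← hval, ← integral_const_mul]
  refine setIntegral_mono_of_nonneg (fun t ht => ?_) (fun t ht => ?_) (hint.const_mul _)
  · exact rpow_nonneg (mul_nonneg (by linarith [ht.out]) (log_nonneg (by linarith [ht.out]))) _
  have ht1 : 0 < t + 1 := by linarith [ht.out]
  have hlog : log (x + 1) ≤ log (t + 1) := log_le_log (by linarith) (by linarith [ht.out])
  rw [mul_rpow ht1.le (log_nonneg (by linarith [ht.out])), mul_comm]
  exact mul_le_mul_of_nonneg_right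
    (rpow_le_rpow_of_nonpos (log_pos (by linarith)) hlog (by linarith)) (rpow_nonneg ht1.le _)

lemma integral_Ioi_add_one_mul_log_rpow_neg_rpow_le {p q x : ℝ}
    (hpq : p.HolderConjugate q) (hx : 0 < x) :
    (∫ t in Ioi x, ((t + 1) * log (t + 1)) ^ (-q)) ^ (p / q)
      ≤ (q - 1) ^ (-(p / q)) * ((x + 1)⁻¹ * log (x + 1) ^ (-p)) := by
  have hq1 : 0 < q - 1 := hpq.symm.sub_one_pos
  have hx1 : 0 < x + 1 := by linarith
  have hlog : 0 < log (x + 1) := log_pos (by linarith)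
  have hnonneg : 0 ≤ ∫ t in Ioi x, ((t + 1) * log (t + 1)) ^ (-q) :=
    setIntegral_nonneg measurableSet_Ioi fun t ht =>
      rpow_nonneg (mul_nonneg (by linarith [ht.out]) (log_nonneg (by linarith [ht.out]))) _
  refine (rpow_le_rpow hnonneg (integral_Ioi_add_one_mul_log_rpow_neg_le hpq.symm.lt hx)
    (div_pos hpq.pos hpq.symm.pos).le).trans_eq ?_
  have h1 : (1 - q) * (p / q) = -1 := by
    rw [hpq.div_conj_eq_sub_one]; linear_combination -hpq.mul_eq_add
  have h2 : -q * (p / q) = -p := by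
    rw [hpq.div_conj_eq_sub_one]; linear_combination -hpq.mul_eq_add
  rw [show log (x + 1) ^ (-q) * ((x + 1) ^ (1 - q) / (q - 1))
      = (q - 1)⁻¹ * ((x + 1) ^ (1 - q) * log (x + 1) ^ (-q)) by ring,
    mul_rpow (by positivity) (by positivity), mul_rpow (by positivity) (by positivity),
    ← rpow_mul hx1.le, ← rpow_mul hlog.le,
    inv_rpow hq1.le, ← rpow_neg hq1.le, h1, h2, rpow_neg_one]

theorem stmt1_general (p q : ℝ) (hp : 1 < p) (hpq : 1 / p + 1 / q = 1) :
    ∫⁻ x in Set.Ioi (1 : ℝ),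
        ENNReal.ofReal ((∫ t in Set.Ioi x, ((t + 1) * Real.log (t + 1)) ^ (-q)) ^ (p / q))
      ≤ ENNReal.ofReal ((q - 1) ^ (-(p / q)) * (p - 1)⁻¹ * (Real.log 2) ^ (1 - p)) := by
  have hconj : p.HolderConjugate q :=
    Real.holderConjugate_iff.2 ⟨hp, by simpa only [one_div] using hpq⟩
  set C := (q - 1) ^ (-(p / q))
  set g : ℝ → ℝ := fun x => (x + 1)⁻¹ * log (x + 1) ^ (-p)
  obtain ⟨hg_int, hg_val⟩ := integral_Ioi_inv_add_one_mul_log_rpow_neg hp zero_lt_one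
  have hCg_nonneg : ∀ x ∈ Ioi (1 : ℝ), 0 ≤ C * g x :=
    fun x hx => mul_nonneg (rpow_nonneg hconj.symm.sub_one_pos.le _) (mul_nonneg
      (inv_nonneg.2 (by linarith [hx.out])) (rpow_nonneg (log_nonneg (by linarith [hx.out])) _))
  calc _ ≤ ∫⁻ x in Ioi (1 : ℝ), ENNReal.ofReal (C * g x) :=
        setLIntegral_mono' measurableSet_Ioi fun x hx => ENNReal.ofReal_le_ofReal
          (integral_Ioi_add_one_mul_log_rpow_neg_rpow_le hconj (by linarith [hx.out]))
    _ = ENNReal.ofReal (∫ x in Ioi (1 : ℝ), C * g x) :=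
        (ofReal_integral_eq_lintegral_ofReal (hg_int.const_mul C)
          ((ae_restrict_iff' measurableSet_Ioi).2 (.of_forall hCg_nonneg))).symm
    _ = ENNReal.ofReal (C * (p - 1)⁻¹ * log 2 ^ (1 - p)) := by
        rw [integral_const_mul, hg_val, one_add_one_eq_two]
        ring_nf

theorem stmt1 (p q : ℝ) (hp : 1 < p) (hq : 1 < q) (hpq : 1 / p + 1 / q = 1) :
    ∫⁻ x in Set.Ioi (1 : ℝ),
        ENNReal.ofReal ((∫ t in Set.Ioi x, ((t + 1) * Real.log (t + 1)) ^ (-q)) ^ (p / q))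
      ≤ ENNReal.ofReal ((q - 1) ^ (-(p / q)) * (p - 1)⁻¹ * (Real.log 2) ^ (1 - p)) :=
  stmt1_general p q hp hpq
end

section
/- Let H be a Hilbert space and let (x_n)_{n=0}^∞ be a sequence in H decomposed into finite consecutive blocks B_0, B_1, B_2, ..., where each block B_k spans a subspace V_k. Suppose each block is (1+ε_k)-basic, the blocks are 'almost orthogonal' in the sense that for unit vectors u ∈ span(V_0 ∪ ... ∪ V_{k-1}) and v ∈ V_k one has |⟨u, v⟩| ≤ δ_k, and ∑(ε_k + δ_k) < ∞. If the δ_k are small enough relative to the ε_k, then the full sequence (x_n) is C-basic for some constant C, with C → 1 as ∑(ε_k + δ_k) → 0. -/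
/-! If `u` lies in the span of the earlier blocks and `v` in block `k`, then
`|⟪u, v⟫| ≤ δₖ ‖u‖ ‖v‖` gives `(1 - δₖ)(‖u‖² + ‖v‖²) ≤ ‖u + v‖² ≤ (1 + δₖ)(‖u‖² + ‖v‖²)`.
Together with the `(1 + εₖ)`-basicity of block `k`, this compares partial sums ending inside
block `k` with the constant `(1 + δₖ)(1 + εₖ)² / (1 - δₖ) ≤ exp (2εₖ + 3δₖ)`. Going back block
by block multiplies these constants, so every partial sum is bounded by `exp (3 ∑ (εₖ + δₖ))`
times any later one. -/

open Finset Real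
open scoped InnerProductSpace

theorem Real.exp_neg_two_mul_le_one_sub {δ : ℝ} (hδ : 0 ≤ δ) (hδ' : δ ≤ 1 / 2) :
    exp (-(2 * δ)) ≤ 1 - δ := by
  rw [exp_neg, inv_le_iff_one_le_mul₀ (exp_pos _)]
  nlinarith [add_one_le_exp (2 * δ)]

section

variable {H : Type*} [NormedAddCommGroup H] [InnerProductSpace ℝ H]

theorem abs_real_inner_le_mul_of_norm_eq_one {U V : Submodule ℝ H} {c : ℝ}
    (h : ∀ u ∈ U, ∀ v ∈ V, ‖u‖ = 1 → ‖v‖ = 1 → |⟪u, v⟫_ℝ| ≤ c) {u v : H}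
    (hu : u ∈ U) (hv : v ∈ V) : |⟪u, v⟫_ℝ| ≤ c * (‖u‖ * ‖v‖) := by
  rcases eq_or_ne u 0 with rfl | hu0
  · simp
  rcases eq_or_ne v 0 with rfl | hv0
  · simp
  have hunit := h _ (U.smul_mem ‖u‖⁻¹ hu) _ (V.smul_mem ‖v‖⁻¹ hv)
    (norm_smul_inv_norm hu0) (norm_smul_inv_norm hv0)
  rw [real_inner_smul_left, real_inner_smul_right, abs_mul, abs_mul, abs_inv, abs_inv,
    abs_norm, abs_norm] at hunit
  have := norm_pos_iff.2 hu0
  have := norm_pos_iff.2 hv0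
  field_simp at hunit
  linarith

theorem norm_add_sq_le_of_abs_real_inner_le {u v : H} {δ : ℝ} (hδ : 0 ≤ δ)
    (h : |⟪u, v⟫_ℝ| ≤ δ * (‖u‖ * ‖v‖)) : ‖u + v‖ ^ 2 ≤ (1 + δ) * (‖u‖ ^ 2 + ‖v‖ ^ 2) := by
  nlinarith [norm_add_sq_real u v, le_abs_self ⟪u, v⟫_ℝ, mul_nonneg hδ (sq_nonneg (‖u‖ - ‖v‖))]

theorem one_sub_mul_le_norm_add_sq_of_abs_real_inner_le {u v : H} {δ : ℝ} (hδ : 0 ≤ δ)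
    (h : |⟪u, v⟫_ℝ| ≤ δ * (‖u‖ * ‖v‖)) : (1 - δ) * (‖u‖ ^ 2 + ‖v‖ ^ 2) ≤ ‖u + v‖ ^ 2 := by
  nlinarith [norm_add_sq_real u v, neg_abs_le ⟪u, v⟫_ℝ, mul_nonneg hδ (sq_nonneg (‖u‖ - ‖v‖))]

theorem norm_add_sq_le_exp_mul_norm_add_sq {u v w : H} {ε δ : ℝ} (hε : 0 ≤ ε) (hδ : 0 ≤ δ)
    (hδ' : δ ≤ 1 / 2) (hv : |⟪u, v⟫_ℝ| ≤ δ * (‖u‖ * ‖v‖)) (hw : |⟪u, w⟫_ℝ| ≤ δ * (‖u‖ * ‖w‖))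
    (hvw : ‖v‖ ≤ (1 + ε) * ‖w‖) :
    ‖u + v‖ ^ 2 ≤ exp (2 * ε + 3 * δ) * ‖u + w‖ ^ 2 := by
  have hu : ‖u‖ ^ 2 ≤ exp (2 * ε) * ‖u‖ ^ 2 :=
    le_mul_of_one_le_left (sq_nonneg _) (one_le_exp (by positivity))
  have hv' : ‖v‖ ^ 2 ≤ exp (2 * ε) * ‖w‖ ^ 2 := by
    have : ‖v‖ ≤ exp ε * ‖w‖ :=
      hvw.trans (by gcongr; linarith [add_one_le_exp ε])
    calc ‖v‖ ^ 2 ≤ (exp ε * ‖w‖) ^ 2 := by gcongr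
      _ = exp (2 * ε) * ‖w‖ ^ 2 := by rw [mul_pow, ← exp_nat_mul]; norm_num
  calc ‖u + v‖ ^ 2 ≤ (1 + δ) * (‖u‖ ^ 2 + ‖v‖ ^ 2) := norm_add_sq_le_of_abs_real_inner_le hδ hv
    _ ≤ exp δ * (exp (2 * ε) * (‖u‖ ^ 2 + ‖w‖ ^ 2)) := by
        gcongr
        · linarith [add_one_le_exp δ]
        · linarith
    _ = exp (2 * ε + 3 * δ) * (exp (-(2 * δ)) * (‖u‖ ^ 2 + ‖w‖ ^ 2)) := by
        rw [← mul_assoc, ← mul_assoc, ← exp_add, ← exp_add]; ring_nf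
    _ ≤ exp (2 * ε + 3 * δ) * ((1 - δ) * (‖u‖ ^ 2 + ‖w‖ ^ 2)) := by
        gcongr; exact exp_neg_two_mul_le_one_sub hδ hδ'
    _ ≤ exp (2 * ε + 3 * δ) * ‖u + w‖ ^ 2 := by
        gcongr; exact one_sub_mul_le_norm_add_sq_of_abs_real_inner_le hδ hw

theorem sum_smul_mem_span_image {ι : Type*} {x : ι → H} (a : ι → ℝ) {s : Finset ι} {t : Set ι}
    (hst : (s : Set ι) ⊆ t) : ∑ j ∈ s, a j • x j ∈ Submodule.span ℝ (x '' t) :=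
  Submodule.sum_smul_mem _ a fun _ hj => Submodule.subset_span (Set.mem_image_of_mem x (hst hj))

variable {x : ℕ → H} (a : ℕ → ℝ)

theorem norm_sum_range_sq_le_of_mem_block {p q m n : ℕ} {ε δ : ℝ} (hε : 0 ≤ ε) (hδ : 0 ≤ δ)
    (hδ' : δ ≤ 1 / 2)
    (hinner : ∀ u ∈ Submodule.span ℝ (x '' Set.Iio p), ∀ v ∈ Submodule.span ℝ (x '' Set.Ico p q),
      |⟪u, v⟫_ℝ| ≤ δ * (‖u‖ * ‖v‖))
    (hbasic : ‖∑ j ∈ Ico p m, a j • x j‖ ≤ (1 + ε) * ‖∑ j ∈ Ico p n, a j • x j‖)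
    (hpm : p ≤ m) (hmn : m ≤ n) (hnq : n ≤ q) :
    ‖∑ j ∈ range m, a j • x j‖ ^ 2 ≤ exp (2 * ε + 3 * δ) * ‖∑ j ∈ range n, a j • x j‖ ^ 2 := by
  have hhead := sum_smul_mem_span_image a (x := x) (s := range p) (t := Set.Iio p) (by simp)
  have hblock {r : ℕ} (hr : r ≤ q) :
      ∑ j ∈ Ico p r, a j • x j ∈ Submodule.span ℝ (x '' Set.Ico p q) :=
    sum_smul_mem_span_image a (by rw [coe_Ico]; exact Set.Ico_subset_Ico_right hr)
  rw [← sum_range_add_sum_Ico _ hpm, ← sum_range_add_sum_Ico _ (hpm.trans hmn)]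
  exact norm_add_sq_le_exp_mul_norm_add_sq hε hδ hδ' (hinner _ hhead _ (hblock (hmn.trans hnq)))
    (hinner _ hhead _ (hblock hnq)) hbasic

theorem norm_sum_range_sq_le_exp_sum_mul {b : ℕ → ℕ} {ε δ : ℕ → ℝ} (hb0 : b 0 = 0)
    (hε : ∀ k, 0 ≤ ε k) (hδ : ∀ k, 0 ≤ δ k) (hδ' : ∀ k, δ k ≤ 1 / 2)
    (hbasic : ∀ k m n, b k ≤ m → m ≤ n → n ≤ b (k + 1) →
      ‖∑ j ∈ Ico (b k) m, a j • x j‖ ≤ (1 + ε k) * ‖∑ j ∈ Ico (b k) n, a j • x j‖)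
    (hinner : ∀ k, ∀ u ∈ Submodule.span ℝ (x '' Set.Iio (b k)),
      ∀ v ∈ Submodule.span ℝ (x '' Set.Ico (b k) (b (k + 1))), |⟪u, v⟫_ℝ| ≤ δ k * (‖u‖ * ‖v‖))
    (K : ℕ) {m n : ℕ} (hmn : m ≤ n) (hnK : n ≤ b K) :
    ‖∑ j ∈ range m, a j • x j‖ ^ 2 ≤
      exp (∑ i ∈ range K, (2 * ε i + 3 * δ i)) * ‖∑ j ∈ range n, a j • x j‖ ^ 2 := by
  have hc (i : ℕ) : 0 ≤ 2 * ε i + 3 * δ i := by linarith [hε i, hδ i]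
  induction K generalizing m n with
  | zero =>
    obtain rfl : m = n := by omega
    simp
  | succ K ih =>
    have hblock {m n : ℕ} (hKm : b K ≤ m) (hmn : m ≤ n) (hnK : n ≤ b (K + 1)) :=
      norm_sum_range_sq_le_of_mem_block a (hε K) (hδ K) (hδ' K) (hinner K)
        (hbasic K m n hKm hmn hnK) hKm hmn hnK
    rw [sum_range_succ, exp_add]
    rcases le_or_gt n (b K) with hnK' | hKn
    · refine (ih hmn hnK').trans ?_
      gcongr
      exact le_mul_of_one_le_right (exp_pos _).le (one_le_exp (hc K))
    rcases le_or_gt (b K) m with hKm | hmK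
    · refine (hblock hKm hmn hnK).trans ?_
      gcongr
      exact le_mul_of_one_le_left (exp_pos _).le (one_le_exp (sum_nonneg fun i _ => hc i))
    · calc _ ≤ _ := ih hmK.le le_rfl
        _ ≤ _ * (exp (2 * ε K + 3 * δ K) * ‖∑ j ∈ range n, a j • x j‖ ^ 2) := by
            gcongr; exact hblock le_rfl hKn.le hnK
        _ = _ := by ring

end

theorem stmt5 :
    ∀ η : ℝ, 0 < η → ∃ θ : ℝ, 0 < θ ∧
      ∀ {H : Type} [inst : NormedAddCommGroup H] [inst2 : InnerProductSpace ℝ H]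
        [inst3 : CompleteSpace H]
        (x : ℕ → H) (b : ℕ → ℕ) (ε δ : ℕ → ℝ),
        StrictMono b → b 0 = 0 →
        (∀ k, 0 ≤ ε k) → (∀ k, 0 ≤ δ k) →
        -- each block is (1 + ε k)-basic
        (∀ k (a : ℕ → ℝ) (m n : ℕ), b k ≤ m → m ≤ n → n ≤ b (k + 1) →
          ‖∑ j ∈ Ico (b k) m, a j • x j‖ ≤ (1 + ε k) * ‖∑ j ∈ Ico (b k) n, a j • x j‖) →
        -- almost orthogonality between earlier blocks and block k
        (∀ k, 1 ≤ k → ∀ u v : H,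
          u ∈ Submodule.span ℝ (x '' Set.Iio (b k)) →
          v ∈ Submodule.span ℝ (x '' Set.Ico (b k) (b (k + 1))) →
          ‖u‖ = 1 → ‖v‖ = 1 → |(inner ℝ u v : ℝ)| ≤ δ k) →
        Summable (fun k => ε k + δ k) →
        (∑' k, (ε k + δ k)) < θ →
        -- conclusion: the full sequence is (1 + η)-basic
        ∀ (a : ℕ → ℝ) (m n : ℕ), m ≤ n →
          ‖∑ j ∈ range m, a j • x j‖ ≤ (1 + η) * ‖∑ j ∈ range n, a j • x j‖ := by
  intro η hη
  refine ⟨min (1 / 2) (2 / 3 * log (1 + η)), lt_min (by norm_num)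
    (mul_pos (by norm_num) (log_pos (by linarith))), ?_⟩
  intro H _ _ _ x b ε δ hb hb0 hε hδ hbasic horth hsum hsmall a m n hmn
  have hterm (k : ℕ) : ε k + δ k ≤ ∑' k, (ε k + δ k) :=
    hsum.le_tsum k fun j _ => add_nonneg (hε j) (hδ j)
  have hδ' (k : ℕ) : δ k ≤ 1 / 2 := by
    linarith [hterm k, hε k, min_le_left (1 / 2 : ℝ) (2 / 3 * log (1 + η))]
  have hinner (k : ℕ) : ∀ u ∈ Submodule.span ℝ (x '' Set.Iio (b k)),
      ∀ v ∈ Submodule.span ℝ (x '' Set.Ico (b k) (b (k + 1))),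
      |⟪u, v⟫_ℝ| ≤ δ k * (‖u‖ * ‖v‖) := by
    rcases k.eq_zero_or_pos with rfl | hk
    · simp [hb0]
    · exact fun u hu v hv => abs_real_inner_le_mul_of_norm_eq_one
        (fun u hu v hv => horth k hk u v hu hv) hu hv
  have hglue := norm_sum_range_sq_le_exp_sum_mul a hb0 hε hδ hδ' (hbasic · a) hinner n hmn
    (hb.id_le n)
  have hconst : ∑ i ∈ range n, (2 * ε i + 3 * δ i) ≤ log ((1 + η) ^ 2) := by
    calc ∑ i ∈ range n, (2 * ε i + 3 * δ i) ≤ ∑ i ∈ range n, 3 * (ε i + δ i) :=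
          sum_le_sum fun i _ => by linarith [hε i]
      _ ≤ 3 * ∑' k, (ε k + δ k) := by
          rw [← mul_sum]; gcongr; exact hsum.sum_le_tsum _ fun j _ => add_nonneg (hε j) (hδ j)
      _ ≤ log ((1 + η) ^ 2) := by
          rw [log_pow]; push_cast
          linarith [min_le_right (1 / 2 : ℝ) (2 / 3 * log (1 + η))]
  rw [le_log_iff_exp_le (by positivity)] at hconst
  have hsq : ‖∑ j ∈ range m, a j • x j‖ ^ 2 ≤ ((1 + η) * ‖∑ j ∈ range n, a j • x j‖) ^ 2 :=
    hglue.trans (by rw [mul_pow]; gcongr)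
  exact (pow_le_pow_iff_left₀ (norm_nonneg _) (by positivity) two_ne_zero).1 hsq
end

section
/- Let 1 ≤ p < ∞. If a Banach lattice X has a Schauder frame (x_j, f_j)_{j=1}^∞, then X has a Schauder frame consisting of positive vectors; namely, the interleaved sequence (x_1^+, f_1), (x_1^-, −f_1), (x_2^+, f_2), (x_2^-, −f_2), ... is a Schauder frame for X. -/
/-!
Pairing the `2k`-th and `(2k+1)`-th terms of the new series gives
`f_k(y) • x_k⁺ - f_k(y) • x_k⁻ = f_k(y) • x_k`, so its partial sums of even length are those of
the original expansion of `y`. The partial sums of odd length differ from these by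
`f_k(y) • x_k⁺`, whose norm is at most `‖f_k(y) • x_k‖` because the norm is solid; this tends to
zero since it is the `k`-th term of a convergent series.
-/

open Finset Filter Topology

theorem Filter.Tendsto.of_comp_two_mul_of_comp_two_mul_add_one {α : Type*} {g : ℕ → α}
    {l : Filter α} (heven : Tendsto (fun n => g (2 * n)) atTop l)
    (hodd : Tendsto (fun n => g (2 * n + 1)) atTop l) : Tendsto g atTop l := by
  intro s hs
  obtain ⟨N₁, h₁⟩ := eventually_atTop.1 (heven hs)
  obtain ⟨N₂, h₂⟩ := eventually_atTop.1 (hodd hs)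
  refine eventually_atTop.2 ⟨2 * max N₁ N₂, fun n hn => ?_⟩
  obtain ⟨k, rfl | rfl⟩ := Nat.even_or_odd' n
  · exact h₁ k (by omega)
  · exact h₂ k (by omega)

theorem Finset.sum_range_two_mul {M : Type*} [AddCommMonoid M] (g : ℕ → M) (n : ℕ) :
    ∑ j ∈ range (2 * n), g j = ∑ k ∈ range n, (g (2 * k) + g (2 * k + 1)) := by
  induction n with
  | zero => simp
  | succ n ih => rw [Nat.mul_succ, sum_range_succ, sum_range_succ, sum_range_succ, ih, add_assoc]

section Series

variable {G : Type*} [AddCommGroup G] [TopologicalSpace G] [IsTopologicalAddGroup G]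

theorem tendsto_zero_of_tendsto_sum_range {g : ℕ → G} {s : G}
    (h : Tendsto (fun n => ∑ j ∈ range n, g j) atTop (𝓝 s)) : Tendsto g atTop (𝓝 0) := by
  simpa [sum_range_succ_sub_sum] using (h.comp (tendsto_add_atTop_nat 1)).sub h

theorem tendsto_sum_range_of_tendsto_sum_pairs {g : ℕ → G} {s : G}
    (hpairs : Tendsto (fun n => ∑ k ∈ range n, (g (2 * k) + g (2 * k + 1))) atTop (𝓝 s))
    (heven : Tendsto (fun k => g (2 * k)) atTop (𝓝 0)) :
    Tendsto (fun n => ∑ j ∈ range n, g j) atTop (𝓝 s) := by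
  refine .of_comp_two_mul_of_comp_two_mul_add_one ?_ ?_
  · simpa only [sum_range_two_mul] using hpairs
  · simpa only [sum_range_succ, sum_range_two_mul, add_zero] using hpairs.add heven

end Series

theorem norm_posPart_le {α : Type*} [NormedAddCommGroup α] [Lattice α] [HasSolidNorm α]
    [IsOrderedAddMonoid α] (a : α) : ‖a⁺‖ ≤ ‖a‖ := by
  simpa using lipschitzWith_posPart.dist_le_mul a 0

theorem stmt7_general {X : Type*} [NormedAddCommGroup X] [Lattice X] [HasSolidNorm X]
    [IsOrderedAddMonoid X] [NormedSpace ℝ X]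
    (x : ℕ → X) (f : ℕ → X →L[ℝ] ℝ)
    (hframe : ∀ y : X,
      Tendsto (fun n => ∑ j ∈ range n, f j y • x j) atTop (𝓝 y)) :
    (∀ j : ℕ, 0 ≤ (fun j => if Even j then (x (j / 2))⁺ else (x (j / 2))⁻) j) ∧
    ∀ y : X,
      Tendsto (fun n => ∑ j ∈ range n,
          (if Even j then f (j / 2) y else -(f (j / 2) y)) •
            (if Even j then (x (j / 2))⁺ else (x (j / 2))⁻))
        atTop (𝓝 y) := by
  refine ⟨fun j => ?_, fun y => ?_⟩
  · dsimp only
    split_ifs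
    exacts [posPart_nonneg _, negPart_nonneg _]
  have hodd : ∀ k, ¬Even (2 * k + 1) := fun k => Nat.not_even_iff_odd.2 (odd_two_mul_add_one k)
  refine tendsto_sum_range_of_tendsto_sum_pairs ?_ ?_
  · simpa [hodd, Nat.mul_add_div, ← sub_eq_add_neg, ← smul_sub, posPart_sub_negPart] using hframe y
  · have hterm := tendsto_zero_of_tendsto_sum_range (hframe y)
    refine squeeze_zero_norm (fun k => ?_) (by simpa using hterm.norm)
    simpa [norm_smul] using
      mul_le_mul_of_nonneg_left (norm_posPart_le (x k)) (norm_nonneg (f k y))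

theorem stmt7 {X : Type*} [NormedAddCommGroup X] [Lattice X] [HasSolidNorm X]
    [IsOrderedAddMonoid X] [NormedSpace ℝ X]
    [CompleteSpace X]
    (x : ℕ → X) (f : ℕ → X →L[ℝ] ℝ)
    (hframe : ∀ y : X,
      Tendsto (fun n => ∑ j ∈ range n, f j y • x j) atTop (𝓝 y)) :
    (∀ j : ℕ, 0 ≤ (fun j => if Even j then (x (j / 2))⁺ else (x (j / 2))⁻) j) ∧
    ∀ y : X,
      Tendsto (fun n => ∑ j ∈ range n,
          (if Even j then f (j / 2) y else -(f (j / 2) y)) •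
            (if Even j then (x (j / 2))⁺ else (x (j / 2))⁻))
        atTop (𝓝 y) :=
  stmt7_general x f hframe
end

section
/- Let X be a Banach space, Y ⊆ X a closed subspace complemented by a bounded projection P: X → Y, and let (x_j, f_j)_{j=1}^∞ be a Schauder frame of X. Then (P x_j, f_j|_Y)_{j=1}^∞ is a Schauder frame of Y. -/
open Finset Filter Topology

theorem stmt8_general {X : Type*} [NormedAddCommGroup X] [NormedSpace ℝ X]
    (Y : Submodule ℝ X)
    (P : X →L[ℝ] Y) (hP : ∀ y : Y, P (y : X) = y)
    (x : ℕ → X) (f : ℕ → X →L[ℝ] ℝ)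
    (hframe : ∀ z : X,
      Tendsto (fun n => ∑ j ∈ range n, f j z • x j) atTop (𝓝 z)) :
    ∀ y : Y,
      Tendsto (fun n => ∑ j ∈ range n, f j (y : X) • P (x j)) atTop (𝓝 y) := by
  intro y
  have h := (P.continuous.tendsto _).comp (hframe (y : X))
  simpa only [Function.comp_def, map_sum, map_smul, hP y] using h

theorem stmt8 {X : Type*} [NormedAddCommGroup X] [NormedSpace ℝ X] [CompleteSpace X]
    (Y : Submodule ℝ X) (hY : IsClosed (Y : Set X))
    (P : X →L[ℝ] Y) (hP : ∀ y : Y, P (y : X) = y)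
    (x : ℕ → X) (f : ℕ → X →L[ℝ] ℝ)
    (hframe : ∀ z : X,
      Tendsto (fun n => ∑ j ∈ range n, f j z • x j) atTop (𝓝 z)) :
    ∀ y : Y,
      Tendsto (fun n => ∑ j ∈ range n, f j (y : X) • P (x j)) atTop (𝓝 y) :=
  stmt8_general Y P hP x f hframe
end

section
/- Let N ∈ ℕ, let (a_j)_{j=1}^N be positive reals, let A = ∑_{j=1}^N a_j, and assume A > ε^{-2} for some ε > 0. Let (f_j)_{j=1}^{2N} be an orthonormal family in a Hilbert space and for 1 ≤ n ≤ N let x_{2n-1} and x_{2n} be defined as in Lemma 2.1 of the paper (cyclic shifts of x_1 = e_1 + ∑ a_j e_{2j} + ∑ ε a_j f_{2j} and x_2 = e_2 + εc f_1 for the orthonormal family (e_j)). Then the vector y = ∑_{j=1}^N (c/√N) f_{2j-1} − ∑_{j=1}^N (1/√N) f_{2j} satisfies dist(y, span(x_j)_{j=1}^{2N}) ≤ ε; specifically, ‖(∑_{j=1}^N (−1/(ε A √N)) x_{2j-1} + (1/(ε √N)) x_{2j}) − y‖ = 1/(εA) < ε. -/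
open Finset

/-- Simultaneous cyclic right shift by `m` on both coordinates of
`ℓ₂(ℤ_M) ⊕ ℓ₂(ℤ_M)`. -/
noncomputable def cycShift (M : ℕ) [NeZero M] (m : ℕ)
    (v : EuclideanSpace ℝ (Fin M ⊕ Fin M)) : EuclideanSpace ℝ (Fin M ⊕ Fin M) :=
  WithLp.toLp 2 fun i => match i with
  | Sum.inl k => v (Sum.inl (k - Fin.ofNat M m))
  | Sum.inr k => v (Sum.inr (k - Fin.ofNat M m))

/-- The vector `x₁ = e₁ + ∑_{j=1}^N a_j e_{2j} + ∑_{j=1}^N ε a_j f_{2j}`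
(indices of `Fin (2N)` are 0-based, so `e_m` is coordinate `m - 1`). -/
noncomputable def xOne (N : ℕ) (ε : ℝ) (a : ℕ → ℝ) :
    EuclideanSpace ℝ (Fin (2 * N) ⊕ Fin (2 * N)) :=
  WithLp.toLp 2 fun i => match i with
  | Sum.inl k => if k.val = 0 then 1 else if k.val % 2 = 1 then a ((k.val + 1) / 2) else 0
  | Sum.inr k => if k.val % 2 = 1 then ε * a ((k.val + 1) / 2) else 0

/-- The vector `x₂ = e₂ + ε c f₁`. -/
noncomputable def xTwo (N : ℕ) (ε c : ℝ) :
    EuclideanSpace ℝ (Fin (2 * N) ⊕ Fin (2 * N)) :=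
  WithLp.toLp 2 fun i => match i with
  | Sum.inl k => if k.val = 1 then 1 else 0
  | Sum.inr k => if k.val = 0 then ε * c else 0

/-- The sequence `x_1, x_2, …, x_{2N}` from Lemma 2.1:
`x_{2n+1} = T_{2n} x₁` and `x_{2n+2} = T_{2n} x₂`. -/
noncomputable def xSeq (N : ℕ) [NeZero (2 * N)] (ε c : ℝ) (a : ℕ → ℝ) :
    ℕ → EuclideanSpace ℝ (Fin (2 * N) ⊕ Fin (2 * N)) :=
  fun j => if j % 2 = 1 then cycShift (2 * N) (j - 1) (xOne N ε a)
    else cycShift (2 * N) (j - 2) (xTwo N ε c)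

/-- The target vector `y = ∑_{j=1}^N (c/√N) f_{2j-1} - ∑_{j=1}^N (1/√N) f_{2j}`. -/
noncomputable def yVec (N : ℕ) (c : ℝ) :
    EuclideanSpace ℝ (Fin (2 * N) ⊕ Fin (2 * N)) :=
  WithLp.toLp 2 fun i => match i with
  | Sum.inl _ => 0
  | Sum.inr k => if k.val % 2 = 0 then c / Real.sqrt N else -1 / Real.sqrt N

/-!
Write `z = ∑ⱼ (α T_{2j} x₁ + β T_{2j} x₂)` with `α = -1/(εA√N)`, `β = 1/(ε√N)`. Each coordinate
of `∑ⱼ T_{2j} v` is the sum of `v` over the coordinates of the same parity, so `z` is constant on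
each parity class: `α` and `αA + β = 0` on the `e`-coordinates, `βεc = c/√N` and `αεA = -1/√N`
on the `f`-coordinates. Hence `z - y = α ∑ⱼ e_{2j-1}`, of norm `|α|√N = 1/(εA)`, and
`1/(εA) < ε` because `ε²A > 1`.
-/

lemma sum_range_add_one_eq_sum_Icc {M : Type*} [AddCommMonoid M] (f : ℕ → M) (n : ℕ) :
    ∑ j ∈ range n, f (j + 1) = ∑ j ∈ Icc 1 n, f j := by
  rw [← Finset.Ico_add_one_right_eq_Icc, Finset.sum_Ico_eq_sum_range, Nat.add_sub_cancel]
  simp only [add_comm]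

lemma Fin.val_sub_mod_two {n : ℕ} (k i : Fin (2 * n)) :
    (k - i).val % 2 = (k.val + i.val) % 2 := by
  rw [Fin.sub_def, Nat.mod_mod_of_dvd _ (dvd_mul_right 2 n)]
  have := i.isLt
  omega

section Parity

variable {N : ℕ} [NeZero (2 * N)] {M : Type*} [AddCommMonoid M]

lemma Fin.val_ofNat_two_mul_add {j p : ℕ} (hj : j < N) (hp : p < 2) :
    (Fin.ofNat (2 * N) (2 * j + p)).val = 2 * j + p := by
  rw [Fin.val_ofNat, Nat.mod_eq_of_lt (by omega)]

lemma sum_range_ofNat_two_mul_add (f : Fin (2 * N) → M) {p : ℕ} (hp : p < 2) :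
    ∑ j ∈ range N, f (Fin.ofNat (2 * N) (2 * j + p)) = ∑ i with i.val % 2 = p, f i := by
  refine Finset.sum_nbij' (fun j => Fin.ofNat (2 * N) (2 * j + p)) (fun i => i.val / 2)
    ?_ ?_ ?_ ?_ (fun _ _ => rfl) <;> intro x hx <;>
    simp only [mem_range, mem_filter, mem_univ, true_and] at hx ⊢
  · rw [Fin.val_ofNat_two_mul_add hx hp]; omega
  · have := x.isLt; omega
  · rw [Fin.val_ofNat_two_mul_add hx hp]; omega
  · ext; rw [Fin.val_ofNat, Nat.mod_eq_of_lt (by omega)]; omega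

/-- Subtracting an even residue modulo `2 * N` preserves parity, so `k - 2j` runs through the
parity class of `k`. -/
lemma sum_range_sub_ofNat_two_mul (v : Fin (2 * N) → M) (k : Fin (2 * N)) :
    ∑ j ∈ range N, v (k - Fin.ofNat (2 * N) (2 * j)) =
      ∑ j ∈ range N, v (Fin.ofNat (2 * N) (2 * j + k.val % 2)) := by
  have hevens := sum_range_ofNat_two_mul_add (fun i => v (k - i)) (p := 0) two_pos
  simp only [add_zero] at hevens
  rw [hevens, sum_range_ofNat_two_mul_add v (Nat.mod_lt _ two_pos)]
  refine Finset.sum_nbij' (k - ·) (k - ·) ?_ ?_ (fun _ _ => sub_sub_cancel k _)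
    (fun _ _ => sub_sub_cancel k _) (fun _ _ => rfl) <;> intro i hi <;>
    simp only [mem_filter, mem_univ, true_and] at hi ⊢ <;> rw [Fin.val_sub_mod_two] <;> omega

end Parity

section Shifts

variable {N : ℕ} [NeZero (2 * N)]

lemma sum_cycShift_apply_inl (v : EuclideanSpace ℝ (Fin (2 * N) ⊕ Fin (2 * N)))
    (k : Fin (2 * N)) :
    (∑ j ∈ range N, cycShift (2 * N) (2 * j) v) (Sum.inl k) =
      ∑ j ∈ range N, v (Sum.inl (Fin.ofNat (2 * N) (2 * j + k.val % 2))) := by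
  rw [WithLp.ofLp_sum, Finset.sum_apply]
  exact sum_range_sub_ofNat_two_mul (fun i => v (Sum.inl i)) k

lemma sum_cycShift_apply_inr (v : EuclideanSpace ℝ (Fin (2 * N) ⊕ Fin (2 * N)))
    (k : Fin (2 * N)) :
    (∑ j ∈ range N, cycShift (2 * N) (2 * j) v) (Sum.inr k) =
      ∑ j ∈ range N, v (Sum.inr (Fin.ofNat (2 * N) (2 * j + k.val % 2))) := by
  rw [WithLp.ofLp_sum, Finset.sum_apply]
  exact sum_range_sub_ofNat_two_mul (fun i => v (Sum.inr i)) k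

end Shifts

section Generators

variable {N : ℕ} [NeZero (2 * N)] (ε c : ℝ) (a : ℕ → ℝ)

lemma ne_zero_of_neZero_two_mul : N ≠ 0 := right_ne_zero_of_mul (NeZero.ne (2 * N))

lemma sum_cycShift_xOne_apply_inl (k : Fin (2 * N)) :
    (∑ j ∈ range N, cycShift (2 * N) (2 * j) (xOne N ε a)) (Sum.inl k) =
      if k.val % 2 = 0 then 1 else ∑ j ∈ Icc 1 N, a j := by
  rw [sum_cycShift_apply_inl, ← sum_range_add_one_eq_sum_Icc]
  rcases Nat.mod_two_eq_zero_or_one k.val with h | h <;> rw [h] <;>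
    simp (disch := simp_all) only [xOne, PiLp.toLp_apply, Fin.val_ofNat_two_mul_add]
  · simp [ne_zero_of_neZero_two_mul]
  · simp [show ∀ j : ℕ, (2 * j + 1 + 1) / 2 = j + 1 by omega]

lemma sum_cycShift_xOne_apply_inr (k : Fin (2 * N)) :
    (∑ j ∈ range N, cycShift (2 * N) (2 * j) (xOne N ε a)) (Sum.inr k) =
      if k.val % 2 = 0 then 0 else ε * ∑ j ∈ Icc 1 N, a j := by
  rw [sum_cycShift_apply_inr, ← sum_range_add_one_eq_sum_Icc, Finset.mul_sum]
  rcases Nat.mod_two_eq_zero_or_one k.val with h | h <;> rw [h] <;>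
    simp (disch := simp_all) only [xOne, PiLp.toLp_apply, Fin.val_ofNat_two_mul_add]
  · simp
  · simp [show ∀ j : ℕ, (2 * j + 1 + 1) / 2 = j + 1 by omega]

lemma sum_cycShift_xTwo_apply_inl (k : Fin (2 * N)) :
    (∑ j ∈ range N, cycShift (2 * N) (2 * j) (xTwo N ε c)) (Sum.inl k) =
      if k.val % 2 = 0 then 0 else 1 := by
  rw [sum_cycShift_apply_inl]
  rcases Nat.mod_two_eq_zero_or_one k.val with h | h <;> rw [h] <;>
    simp (disch := simp_all) only [xTwo, PiLp.toLp_apply, Fin.val_ofNat_two_mul_add]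
  · simp
  · simp [ne_zero_of_neZero_two_mul]

lemma sum_cycShift_xTwo_apply_inr (k : Fin (2 * N)) :
    (∑ j ∈ range N, cycShift (2 * N) (2 * j) (xTwo N ε c)) (Sum.inr k) =
      if k.val % 2 = 0 then ε * c else 0 := by
  rw [sum_cycShift_apply_inr]
  rcases Nat.mod_two_eq_zero_or_one k.val with h | h <;> rw [h] <;>
    simp (disch := simp_all) only [xTwo, PiLp.toLp_apply, Fin.val_ofNat_two_mul_add]
  · simp [ne_zero_of_neZero_two_mul]
  · simp

end Generators

section Combination

variable {N : ℕ} [NeZero (2 * N)] (ε c : ℝ) (a : ℕ → ℝ)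

lemma xSeq_two_mul_add_one (j : ℕ) :
    xSeq N ε c a (2 * j + 1) = cycShift (2 * N) (2 * j) (xOne N ε a) := by
  simp [xSeq]

lemma xSeq_two_mul_add_two (j : ℕ) :
    xSeq N ε c a (2 * j + 2) = cycShift (2 * N) (2 * j) (xTwo N ε c) := by
  simp [xSeq]

lemma sum_smul_xSeq_eq (α β : ℝ) :
    ∑ j ∈ range N, (α • xSeq N ε c a (2 * j + 1) + β • xSeq N ε c a (2 * j + 2)) =
      α • ∑ j ∈ range N, cycShift (2 * N) (2 * j) (xOne N ε a) +
        β • ∑ j ∈ range N, cycShift (2 * N) (2 * j) (xTwo N ε c) := by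
  simp only [xSeq_two_mul_add_one, xSeq_two_mul_add_two, Finset.sum_add_distrib,
    Finset.smul_sum]

lemma sum_smul_xSeq_apply_inl (α β : ℝ) (k : Fin (2 * N)) :
    (∑ j ∈ range N, (α • xSeq N ε c a (2 * j + 1) + β • xSeq N ε c a (2 * j + 2)))
      (Sum.inl k) = if k.val % 2 = 0 then α else α * ∑ j ∈ Icc 1 N, a j + β := by
  rw [sum_smul_xSeq_eq, PiLp.add_apply, PiLp.smul_apply, PiLp.smul_apply,
    sum_cycShift_xOne_apply_inl, sum_cycShift_xTwo_apply_inl]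
  split_ifs <;> simp

lemma sum_smul_xSeq_apply_inr (α β : ℝ) (k : Fin (2 * N)) :
    (∑ j ∈ range N, (α • xSeq N ε c a (2 * j + 1) + β • xSeq N ε c a (2 * j + 2)))
      (Sum.inr k) = if k.val % 2 = 0 then β * (ε * c) else α * (ε * ∑ j ∈ Icc 1 N, a j) := by
  rw [sum_smul_xSeq_eq, PiLp.add_apply, PiLp.smul_apply, PiLp.smul_apply,
    sum_cycShift_xOne_apply_inr, sum_cycShift_xTwo_apply_inr]
  split_ifs <;> simp

lemma sum_smul_xSeq_mem_span (α β : ℝ) :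
    ∑ j ∈ range N, (α • xSeq N ε c a (2 * j + 1) + β • xSeq N ε c a (2 * j + 2)) ∈
      Submodule.span ℝ (xSeq N ε c a '' Set.Icc 1 (2 * N)) := by
  refine Submodule.sum_mem _ fun j hj => ?_
  have hjN := mem_range.mp hj
  refine add_mem (Submodule.smul_mem _ _ ?_) (Submodule.smul_mem _ _ ?_) <;>
    exact Submodule.subset_span ⟨_, Set.mem_Icc.mpr ⟨by omega, by omega⟩, rfl⟩

end Combination

lemma norm_toLp_sum_elim_even_const {N : ℕ} [NeZero (2 * N)] (r : ℝ) :
    ‖(WithLp.toLp 2 (Sum.elim (fun k : Fin (2 * N) => if k.val % 2 = 0 then r else 0) 0) :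
      EuclideanSpace ℝ (Fin (2 * N) ⊕ Fin (2 * N)))‖ = |r| * Real.sqrt N := by
  have hcard : #{k : Fin (2 * N) | k.val % 2 = 0} = N := by
    simpa using (sum_range_ofNat_two_mul_add (fun _ => (1 : ℕ)) two_pos).symm
  rw [EuclideanSpace.norm_eq, Fintype.sum_sum_type]
  simp [apply_ite, Finset.sum_ite, hcard, Real.sqrt_sq_eq_abs, mul_comm]

lemma one_div_mul_lt_of_inv_sq_lt {ε A : ℝ} (hε : 0 < ε) (hA : ε⁻¹ ^ 2 < A) :
    1 / (ε * A) < ε := by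
  have hA0 : 0 < A := (by positivity : (0 : ℝ) < ε⁻¹ ^ 2).trans hA
  rw [div_lt_iff₀ (by positivity)]
  calc 1 = ε ^ 2 * ε⁻¹ ^ 2 := by field_simp
    _ < ε ^ 2 * A := by gcongr
    _ = ε * (ε * A) := by ring

theorem stmt16_general (N : ℕ) [NeZero (2 * N)] (ε c : ℝ)
    (hε : 0 < ε)
    (a : ℕ → ℝ)
    (A : ℝ) (hA : A = ∑ j ∈ Icc 1 N, a j) (hAbig : A > ε⁻¹ ^ 2) :
    ‖(∑ j ∈ range N,
        ((-1 / (ε * A * Real.sqrt N)) • xSeq N ε c a (2 * j + 1) +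
          (1 / (ε * Real.sqrt N)) • xSeq N ε c a (2 * j + 2))) - yVec N c‖
      = 1 / (ε * A) ∧
    1 / (ε * A) < ε ∧
    Metric.infDist (yVec N c)
      (Submodule.span ℝ (xSeq N ε c a '' Set.Icc 1 (2 * N)) :
        Set (EuclideanSpace ℝ (Fin (2 * N) ⊕ Fin (2 * N)))) ≤ ε := by
  have hN : 0 < Real.sqrt N :=
    Real.sqrt_pos.mpr (Nat.cast_pos.mpr (Nat.pos_of_ne_zero ne_zero_of_neZero_two_mul))
  have hA0 : 0 < A := (by positivity : (0 : ℝ) < ε⁻¹ ^ 2).trans hAbig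
  set z := ∑ j ∈ range N,
    ((-1 / (ε * A * Real.sqrt N)) • xSeq N ε c a (2 * j + 1) +
      (1 / (ε * Real.sqrt N)) • xSeq N ε c a (2 * j + 2))
  have hzy : z - yVec N c = WithLp.toLp 2 (Sum.elim
      (fun k : Fin (2 * N) => if k.val % 2 = 0 then -1 / (ε * A * Real.sqrt N) else 0) 0) := by
    ext (k | k) <;>
      simp only [z, PiLp.sub_apply, sum_smul_xSeq_apply_inl, sum_smul_xSeq_apply_inr, ← hA,
        yVec, Sum.elim_inl, Sum.elim_inr, Pi.zero_apply] <;>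
      split_ifs <;> field_simp <;> ring
  have hnorm : ‖z - yVec N c‖ = 1 / (ε * A) := by
    rw [hzy, norm_toLp_sum_elim_even_const, abs_div, abs_neg, abs_one, abs_of_pos (by positivity)]
    field_simp
  refine ⟨hnorm, one_div_mul_lt_of_inv_sq_lt hε hAbig, ?_⟩
  calc Metric.infDist (yVec N c) _ ≤ dist (yVec N c) z :=
        Metric.infDist_le_dist_of_mem (sum_smul_xSeq_mem_span ε c a _ _)
    _ = 1 / (ε * A) := by rw [dist_comm, dist_eq_norm, hnorm]
    _ ≤ ε := (one_div_mul_lt_of_inv_sq_lt hε hAbig).le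

theorem stmt16 (N : ℕ) (hN : 0 < N) [NeZero (2 * N)] (ε c : ℝ)
    (hε : 0 < ε) (hc0 : 0 < c) (hc1 : c ≤ 1)
    (a : ℕ → ℝ) (ha : ∀ j, 1 ≤ j → j ≤ N → 0 < a j)
    (A : ℝ) (hA : A = ∑ j ∈ Icc 1 N, a j) (hAbig : A > ε⁻¹ ^ 2) :
    ‖(∑ j ∈ range N,
        ((-1 / (ε * A * Real.sqrt N)) • xSeq N ε c a (2 * j + 1) +
          (1 / (ε * Real.sqrt N)) • xSeq N ε c a (2 * j + 2))) - yVec N c‖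
      = 1 / (ε * A) ∧
    1 / (ε * A) < ε ∧
    Metric.infDist (yVec N c)
      (Submodule.span ℝ (xSeq N ε c a '' Set.Icc 1 (2 * N)) :
        Set (EuclideanSpace ℝ (Fin (2 * N) ⊕ Fin (2 * N)))) ≤ ε :=
  stmt16_general N ε c hε a A hA hAbig
end

section
/- Let 1 < p < ∞ with conjugate exponent q, let N ∈ ℕ, let (a_j)_{j=1}^N be positive reals with ∑_{j=1}^N (∑_{i=j}^N a_i^q)^{p/q} < ε^p, and let M < N. Then for any scalars (b_j)_{j=1}^{2N}, the vector y_{1,2} = ∑_{j=M+1}^N (∑_{i=0}^M b_{2i+1} a_{j-i}) e_{2j} (indices in a_• taken so that a_{j-i} appears with j−i ≥ 1) satisfies ‖y_{1,2}‖_p ≤ ε (∑_{j=1}^N |b_{2j-1}|^p)^{1/p}. -/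
/-!
Each coordinate of `y_{1,2}` is the pairing of the odd-indexed `b`'s with a window
`a_{j-M}, …, a_j` of the sequence `a`. Hölder bounds its `p`-th power by `‖b‖_p^p` times the
`(p/q)`-th power of the `ℓ_q`-tail of `a` starting at `j - M`; summing over `j`, these tails
are a subfamily of the ones in the hypothesis, whose total is below `ε^p`.
-/

open Finset

theorem Finset.sum_comp_le_sum_of_injOn {ι κ M : Type*} [AddCommMonoid M] [PartialOrder M]
    [IsOrderedAddMonoid M] {s : Finset ι} {t : Finset κ} {σ : ι → κ} (f : κ → M)
    (hσ : Set.InjOn σ s) (hst : ∀ i ∈ s, σ i ∈ t) (hf : ∀ k ∈ t, 0 ≤ f k) :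
    ∑ i ∈ s, f (σ i) ≤ ∑ k ∈ t, f k := by
  classical
  rw [← sum_image hσ]
  exact sum_le_sum_of_subset_of_nonneg (image_subset_iff.2 hst) fun k hk _ => hf k hk

namespace Real

theorem abs_sum_mul_rpow_le {ι : Type*} (s : Finset ι) (f g : ι → ℝ) {p q : ℝ}
    (hpq : p.HolderConjugate q) :
    |∑ i ∈ s, f i * g i| ^ p ≤ (∑ i ∈ s, |f i| ^ p) * (∑ i ∈ s, |g i| ^ q) ^ (p / q) := by
  have hF : 0 ≤ ∑ i ∈ s, |f i| ^ p := sum_nonneg fun i _ => rpow_nonneg (abs_nonneg _) p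
  have hG : 0 ≤ ∑ i ∈ s, |g i| ^ q := sum_nonneg fun i _ => rpow_nonneg (abs_nonneg _) q
  have holder : |∑ i ∈ s, f i * g i|
      ≤ (∑ i ∈ s, |f i| ^ p) ^ (1 / p) * (∑ i ∈ s, |g i| ^ q) ^ (1 / q) :=
    calc |∑ i ∈ s, f i * g i| ≤ ∑ i ∈ s, |f i| * |g i| := by
          simpa only [abs_mul] using abs_sum_le_sum_abs (fun i => f i * g i) s
      _ ≤ _ := by
          simpa only [abs_abs] using inner_le_Lp_mul_Lq s (fun i => |f i|) (fun i => |g i|) hpq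
  calc |∑ i ∈ s, f i * g i| ^ p
      ≤ ((∑ i ∈ s, |f i| ^ p) ^ (1 / p) * (∑ i ∈ s, |g i| ^ q) ^ (1 / q)) ^ p :=
        rpow_le_rpow (abs_nonneg _) holder hpq.nonneg
    _ = _ := by
        rw [mul_rpow (rpow_nonneg hF _) (rpow_nonneg hG _), ← rpow_mul hF, ← rpow_mul hG,
          one_div_mul_cancel hpq.ne_zero, rpow_one, one_div_mul_eq_div]

theorem rpow_one_div_le_mul_of_le_rpow_mul {x y ε p : ℝ} (hx : 0 ≤ x) (hy : 0 ≤ y) (hε : 0 ≤ ε)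
    (hp : 0 < p) (h : x ≤ ε ^ p * y) : x ^ (1 / p) ≤ ε * y ^ (1 / p) :=
  calc x ^ (1 / p) ≤ (ε ^ p * y) ^ (1 / p) := rpow_le_rpow hx h (by positivity)
    _ = ε * y ^ (1 / p) := by
        rw [mul_rpow (rpow_nonneg hε _) hy, ← rpow_mul hε, mul_one_div_cancel hp.ne', rpow_one]

end Real

section Reindexing

variable {M : Type*} [AddCommMonoid M] [PartialOrder M] [IsOrderedAddMonoid M]

theorem sum_range_comp_succ_le_sum_Icc (f : ℕ → M) {n N : ℕ} (hn : n ≤ N)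
    (hf : ∀ k ∈ Icc 1 N, 0 ≤ f k) : ∑ i ∈ range n, f (i + 1) ≤ ∑ k ∈ Icc 1 N, f k := by
  refine sum_comp_le_sum_of_injOn f (add_left_injective 1).injOn (fun i hi => ?_) hf
  simp only [mem_range, mem_Icc] at hi ⊢
  omega

theorem sum_range_comp_sub_le_sum_Icc (f : ℕ → M) {m j N : ℕ} (hmj : m ≤ j) (hjN : j ≤ N)
    (hf : ∀ k ∈ Icc (j - m) N, 0 ≤ f k) :
    ∑ i ∈ range (m + 1), f (j - i) ≤ ∑ k ∈ Icc (j - m) N, f k := by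
  refine sum_comp_le_sum_of_injOn (σ := (j - ·)) f (fun i hi i' hi' h => ?_) (fun i hi => ?_) hf
  · simp only [coe_range, Set.mem_Iio] at hi hi' h
    omega
  · simp only [mem_range, mem_Icc] at hi ⊢
    omega

theorem sum_Icc_comp_sub_le_sum_Icc (f : ℕ → M) (m N : ℕ) (hf : ∀ k ∈ Icc 1 N, 0 ≤ f k) :
    ∑ j ∈ Icc (m + 1) N, f (j - m) ≤ ∑ k ∈ Icc 1 N, f k := by
  refine sum_comp_le_sum_of_injOn (σ := (· - m)) f (fun j hj j' hj' h => ?_) (fun j hj => ?_) hf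
  · simp only [coe_Icc, Set.mem_Icc] at hj hj' h
    omega
  · simp only [mem_Icc] at hj ⊢
    omega

end Reindexing

theorem abs_sum_range_mul_sub_rpow_le {p q : ℝ} (hpq : p.HolderConjugate q) (c a : ℕ → ℝ)
    {m N j : ℕ} (hmj : m ≤ j) (hjN : j ≤ N) (ha : ∀ k ∈ Icc (j - m) N, 0 ≤ a k) :
    |∑ i ∈ range (m + 1), c i * a (j - i)| ^ p
      ≤ (∑ i ∈ range (m + 1), |c i| ^ p) * (∑ k ∈ Icc (j - m) N, a k ^ q) ^ (p / q) := by
  refine (Real.abs_sum_mul_rpow_le _ c _ hpq).trans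
    (mul_le_mul_of_nonneg_left (Real.rpow_le_rpow (by positivity) ?_
      (div_pos hpq.pos hpq.symm.pos).le) (by positivity))
  calc ∑ i ∈ range (m + 1), |a (j - i)| ^ q ≤ ∑ k ∈ Icc (j - m) N, |a k| ^ q :=
        sum_range_comp_sub_le_sum_Icc (fun k => |a k| ^ q) hmj hjN fun k _ => by positivity
    _ = ∑ k ∈ Icc (j - m) N, a k ^ q := sum_congr rfl fun k hk => by rw [abs_of_nonneg (ha k hk)]

theorem stmt17_general (p q ε : ℝ) (hp : 1 < p) (hpq : 1 / p + 1 / q = 1)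
    (hε : 0 < ε) (N M : ℕ)
    (a : ℕ → ℝ) (ha : ∀ j, 1 ≤ j → j ≤ N → 0 < a j)
    (htail : ∑ j ∈ Icc 1 N, (∑ i ∈ Icc j N, a i ^ q) ^ (p / q) < ε ^ p)
    (b : ℕ → ℝ) :
    (∑ j ∈ Icc (M + 1) N, |∑ i ∈ range (M + 1), b (2 * i + 1) * a (j - i)| ^ p) ^ (1 / p)
      ≤ ε * (∑ j ∈ Icc 1 N, |b (2 * j - 1)| ^ p) ^ (1 / p) := by
  have hpq' : p.HolderConjugate q :=
    Real.holderConjugate_iff.mpr ⟨hp, by simpa only [one_div] using hpq⟩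
  set B := ∑ j ∈ Icc 1 N, |b (2 * j - 1)| ^ p
  set T : ℕ → ℝ := fun j => (∑ i ∈ Icc j N, a i ^ q) ^ (p / q)
  have hT : ∀ k ∈ Icc 1 N, 0 ≤ T k := fun k hk =>
    Real.rpow_nonneg (sum_nonneg fun i hi => Real.rpow_nonneg
      (ha i (by simp only [mem_Icc] at hk hi; omega) (mem_Icc.1 hi).2).le _) _
  have hcoord : ∀ j ∈ Icc (M + 1) N,
      |∑ i ∈ range (M + 1), b (2 * i + 1) * a (j - i)| ^ p ≤ B * T (j - M) := by
    intro j hj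
    rw [mem_Icc] at hj
    -- `2 * (i + 1) - 1` and `2 * i + 1` are definitionally equal.
    have hb : ∑ i ∈ range (M + 1), |b (2 * i + 1)| ^ p ≤ B :=
      sum_range_comp_succ_le_sum_Icc (fun k => |b (2 * k - 1)| ^ p) (by omega)
        fun k _ => by positivity
    refine (abs_sum_range_mul_sub_rpow_le hpq' _ a (by omega) hj.2 fun k hk => ?_).trans
      (mul_le_mul_of_nonneg_right hb (hT _ (by simp only [mem_Icc]; omega)))
    rw [mem_Icc] at hk
    exact (ha k (by omega) hk.2).le
  refine Real.rpow_one_div_le_mul_of_le_rpow_mul (by positivity) (by positivity) hε.le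
    hpq'.pos ?_
  calc _ ≤ ∑ j ∈ Icc (M + 1) N, B * T (j - M) := sum_le_sum hcoord
    _ = (∑ j ∈ Icc (M + 1) N, T (j - M)) * B := by rw [← mul_sum, mul_comm]
    _ ≤ ε ^ p * B := mul_le_mul_of_nonneg_right
        ((sum_Icc_comp_sub_le_sum_Icc T M N hT).trans htail.le) (by positivity)

theorem stmt17 (p q ε : ℝ) (hp : 1 < p) (hq : 1 < q) (hpq : 1 / p + 1 / q = 1)
    (hε : 0 < ε) (N M : ℕ) (hMN : M < N)
    (a : ℕ → ℝ) (ha : ∀ j, 1 ≤ j → j ≤ N → 0 < a j)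
    (htail : ∑ j ∈ Icc 1 N, (∑ i ∈ Icc j N, a i ^ q) ^ (p / q) < ε ^ p)
    (b : ℕ → ℝ) :
    (∑ j ∈ Icc (M + 1) N, |∑ i ∈ range (M + 1), b (2 * i + 1) * a (j - i)| ^ p) ^ (1 / p)
      ≤ ε * (∑ j ∈ Icc 1 N, |b (2 * j - 1)| ^ p) ^ (1 / p) :=
  stmt17_general p q ε hp hpq hε N M a ha htail b
end
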